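/- arXiv:1708.07713 — 2 statements merged into one kernel-verified Lean document; each statement's English description precedes it below -/
import Mathlib

section
/- Let ρ be a Finsler metric on H \ {0}. Then ρ is invariant with respect to every congruence of H (i.e., ρ_{Tg}(Th) = ρ_g(h) for every linear map T that is a nonzero scalar multiple of an isometry, and all nonzero g and all h) if and only if there exists a function ϑ : [0, π/2] → ℝ such that ρ_g(h) = (‖h‖/‖g‖)·ϑ(∠(g,h)) for all nonzero g, h ∈ H. -/
/-!
Congruences preserve both `‖h‖ / ‖g‖` and the acute angle, which gives one direction.
Conversely, an invariant `ρ` satisfies `ρ_g(h) = (‖h‖ / ‖g‖) ρ_{g₁}(h₁)` for the normalised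
vectors `g₁, h₁`, and on unit vectors `ρ_g(h)` depends only on `|⟨g, h⟩|`: multiplying `h` by a
unimodular scalar, which `ρ_g` does not see, makes `⟨g, h⟩` equal to `⟨g', h'⟩`, and then some
isometry of `H` maps `(g, h)` to `(g', h')`. That isometry exists even when `H` is
infinite-dimensional and incomplete: it is built on the finite-dimensional span of the four
vectors and extended by the identity on the orthogonal complement of that span.
-/

/-- The acute angle `∠(g,h) = arccos(|⟨h,g⟩| / (‖h‖‖g‖))` between nonzero vectors. -/
noncomputable def acuteAngle (𝕜 : Type*) {H : Type*} [RCLike 𝕜] [NormedAddCommGroup H]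
    [InnerProductSpace 𝕜 H] (g h : H) : ℝ :=
  Real.arccos (‖(inner 𝕜 g h : 𝕜)‖ / (‖h‖ * ‖g‖))

open scoped InnerProductSpace
open Set Submodule Module

theorem exists_norm_eq_one_mul_eq {K : Type*} [NormedDivisionRing K] {a b : K}
    (h : ‖a‖ = ‖b‖) : ∃ u : K, ‖u‖ = 1 ∧ u * a = b := by
  rcases eq_or_ne a 0 with rfl | ha
  · exact ⟨1, norm_one, by simpa [eq_comm] using h⟩
  · refine ⟨b * a⁻¹, ?_, inv_mul_cancel_right₀ ha b⟩
    rw [norm_mul, norm_inv, ← h, mul_inv_cancel₀ (norm_ne_zero_iff.2 ha)]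

section Isometries

variable {𝕜 H : Type*} [RCLike 𝕜] [NormedAddCommGroup H] [InnerProductSpace 𝕜 H]

theorem Submodule.exists_linearIsometry_extension (K : Submodule 𝕜 H)
    [K.HasOrthogonalProjection] (U : K →ₗᵢ[𝕜] K) : ∃ T : H →ₗᵢ[𝕜] H, ∀ x : K, T x = U x := by
  let P := K.orthogonalProjectionOnto
  let T : H →ₗ[𝕜] H := K.subtype ∘ₗ U.toLinearMap ∘ₗ P.toLinearMap + Kᗮ.starProjection.toLinearMap
  have hT : ∀ x, T x = U (P x) + Kᗮ.starProjection x := fun _ => rfl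
  refine ⟨⟨T, fun x => ?_⟩, fun x => ?_⟩
  · have horth : ⟪(U (P x) : H), Kᗮ.starProjection x⟫_𝕜 = 0 :=
      inner_right_of_mem_orthogonal (U _).2 (Kᗮ.orthogonalProjectionOnto x).2
    have hU : ‖(U (P x) : H)‖ = ‖K.starProjection x‖ := U.norm_map _
    rw [← sq_eq_sq₀ (norm_nonneg _) (norm_nonneg _), hT, norm_sq_eq_add_norm_sq_starProjection x K,
      sq, sq, norm_add_sq_eq_norm_sq_add_norm_sq_of_inner_eq_zero _ _ horth, hU, sq]
  · simp [hT, P, starProjection_orthogonal_apply_eq_zero x.2]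

theorem Orthonormal.exists_linearIsometry_apply_eq {ι : Type*} [Finite ι] {v w : ι → H}
    (hv : Orthonormal 𝕜 v) (hw : Orthonormal 𝕜 w) : ∃ T : H →ₗᵢ[𝕜] H, ∀ i, T (v i) = w i := by
  let K := span 𝕜 (range v ∪ range w)
  have : FiniteDimensional 𝕜 K :=
    FiniteDimensional.span_of_finite 𝕜 ((finite_range v).union (finite_range w))
  let v' : ι → K := fun i => ⟨v i, subset_span (.inl ⟨i, rfl⟩)⟩
  let w' : ι → K := fun i => ⟨w i, subset_span (.inr ⟨i, rfl⟩)⟩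
  have hv' : Orthonormal 𝕜 v' := K.subtypeₗᵢ.orthonormal_comp_iff.1 hv
  have hw' : Orthonormal 𝕜 w' := K.subtypeₗᵢ.orthonormal_comp_iff.1 hw
  let b := Basis.span hv'.linearIndependent
  have hbv : ∀ i, (b i : K) = v' i := fun i =>
    congrArg Subtype.val (Basis.span_apply hv'.linearIndependent i)
  have hb : Orthonormal 𝕜 b := by
    refine (span 𝕜 (range v')).subtypeₗᵢ.orthonormal_comp_iff.1 ?_
    convert hv' using 1
    exact funext hbv
  have hbw : Orthonormal 𝕜 (b.constr 𝕜 w' ∘ b) := by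
    rwa [show b.constr 𝕜 w' ∘ b = w' from funext (b.constr_basis 𝕜 w')]
  -- Inside the finite-dimensional `K`, the map `v' i ↦ w' i` extends to an isometry of `K`.
  obtain ⟨T, hT⟩ := K.exists_linearIsometry_extension
    ((b.constr 𝕜 w').isometryOfOrthonormal hb hbw).extend
  refine ⟨T, fun i => ?_⟩
  rw [show v i = (v' i : H) from rfl, hT, ← hbv, LinearIsometry.extend_apply]
  simp [b.constr_basis, w']

theorem orthonormal_pair {x y : H} (hx : ‖x‖ = 1) (hy : ‖y‖ = 1) (hxy : ⟪x, y⟫_𝕜 = 0) :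
    Orthonormal 𝕜 ![x, y] := by
  refine ⟨Fin.forall_fin_two.2 ⟨hx, hy⟩, fun i j hij => ?_⟩
  fin_cases i <;> fin_cases j <;> simp_all [inner_eq_zero_symm]

theorem exists_linearIsometry_apply_eq_of_inner_eq_zero {x f x' f' : H} (hx : ‖x‖ = 1)
    (hx' : ‖x'‖ = 1) (hf : ‖f‖ = ‖f'‖) (hxf : ⟪x, f⟫_𝕜 = 0) (hxf' : ⟪x', f'⟫_𝕜 = 0) :
    ∃ T : H →ₗᵢ[𝕜] H, T x = x' ∧ T f = f' := by
  rcases eq_or_ne f 0 with rfl | hf0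
  · obtain ⟨T, hT⟩ := Orthonormal.exists_linearIsometry_apply_eq (𝕜 := 𝕜)
      (v := fun _ : Unit => x) (w := fun _ => x') (by simpa using hx) (by simpa using hx')
    exact ⟨T, hT (), by simpa [eq_comm] using hf⟩
  · let a : 𝕜 := (‖f‖ : 𝕜)⁻¹
    have ha : a ≠ 0 := by simpa [a] using hf0
    have hunit : ∀ z : H, ‖z‖ = ‖f‖ → ‖a • z‖ = 1 := fun z hz => by
      simp [a, norm_smul, hz, norm_ne_zero_iff.2 hf0]
    obtain ⟨T, hT⟩ := Orthonormal.exists_linearIsometry_apply_eq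
      (orthonormal_pair (y := a • f) hx (hunit f rfl) (by rw [inner_smul_right, hxf, mul_zero]))
      (orthonormal_pair (y := a • f') hx' (hunit f' hf.symm)
        (by rw [inner_smul_right, hxf', mul_zero]))
    refine ⟨T, by simpa using hT 0, smul_right_injective H ha ?_⟩
    simpa using hT 1

theorem inner_sub_inner_smul_self {x : H} (hx : ‖x‖ = 1) (y : H) :
    ⟪x, y - ⟪x, y⟫_𝕜 • x⟫_𝕜 = 0 := by
  rw [inner_sub_right, inner_smul_right, inner_self_eq_one_of_norm_eq_one hx, mul_one, sub_self]

theorem norm_sq_eq_norm_inner_sq_add {x : H} (hx : ‖x‖ = 1) (y : H) :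
    ‖y‖ ^ 2 = ‖⟪x, y⟫_𝕜‖ ^ 2 + ‖y - ⟪x, y⟫_𝕜 • x‖ ^ 2 := by
  have h := norm_add_sq_eq_norm_sq_add_norm_sq_of_inner_eq_zero (⟪x, y⟫_𝕜 • x)
    (y - ⟪x, y⟫_𝕜 • x) (by rw [inner_smul_left, inner_sub_inner_smul_self hx, mul_zero])
  rw [add_sub_cancel, norm_smul, hx, mul_one] at h
  simpa only [sq] using h

theorem exists_linearIsometry_apply_eq_pair {x y x' y' : H} (hx : ‖x‖ = 1) (hx' : ‖x'‖ = 1)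
    (hy : ‖y‖ = ‖y'‖) (hxy : ⟪x, y⟫_𝕜 = ⟪x', y'⟫_𝕜) :
    ∃ T : H →ₗᵢ[𝕜] H, T x = x' ∧ T y = y' := by
  have hf : ‖y - ⟪x, y⟫_𝕜 • x‖ = ‖y' - ⟪x', y'⟫_𝕜 • x'‖ := by
    have h := norm_sq_eq_norm_inner_sq_add (𝕜 := 𝕜) hx y
    rw [hy, norm_sq_eq_norm_inner_sq_add (𝕜 := 𝕜) hx' y', hxy, add_right_inj] at h
    rw [hxy]
    exact (sq_eq_sq₀ (norm_nonneg _) (norm_nonneg _)).1 h.symm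
  obtain ⟨T, hTx, hTf⟩ := exists_linearIsometry_apply_eq_of_inner_eq_zero hx hx' hf
    (inner_sub_inner_smul_self hx y) (inner_sub_inner_smul_self hx' y')
  refine ⟨T, hTx, ?_⟩
  rwa [map_sub, map_smul, hTx, hxy, sub_left_inj] at hTf

end Isometries

section AcuteAngle

variable {𝕜 H : Type*} [RCLike 𝕜] [NormedAddCommGroup H] [InnerProductSpace 𝕜 H]

theorem acuteAngle_smul_smul {a b : 𝕜} (ha : a ≠ 0) (hb : b ≠ 0) (g h : H) :
    acuteAngle 𝕜 (a • g) (b • h) = acuteAngle 𝕜 g h := by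
  have hab : ‖a‖ * ‖b‖ ≠ 0 := mul_ne_zero (norm_ne_zero_iff.2 ha) (norm_ne_zero_iff.2 hb)
  rw [acuteAngle, acuteAngle, inner_smul_left, inner_smul_right, norm_mul, norm_mul,
    RCLike.norm_conj, norm_smul, norm_smul, ← mul_assoc,
    show ‖b‖ * ‖h‖ * (‖a‖ * ‖g‖) = ‖a‖ * ‖b‖ * (‖h‖ * ‖g‖) by ring, mul_div_mul_left _ _ hab]

theorem LinearIsometry.acuteAngle_map {E : Type*} [NormedAddCommGroup E] [InnerProductSpace 𝕜 E]
    (T : H →ₗᵢ[𝕜] E) (g h : H) : acuteAngle 𝕜 (T g) (T h) = acuteAngle 𝕜 g h := by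
  simp only [acuteAngle, T.inner_map_map, T.norm_map]

theorem cos_acuteAngle_of_norm_eq_one {g h : H} (hg : ‖g‖ = 1) (hh : ‖h‖ = 1) :
    Real.cos (acuteAngle 𝕜 g h) = ‖⟪g, h⟫_𝕜‖ := by
  have hle : ‖⟪g, h⟫_𝕜‖ ≤ 1 := by simpa [hg, hh] using norm_inner_le_norm (𝕜 := 𝕜) g h
  rw [acuteAngle, hg, hh, mul_one, div_one,
    Real.cos_arccos (by linarith [norm_nonneg ⟪g, h⟫_𝕜]) hle]

end AcuteAngle

section Finsler

variable (𝕜 : Type*) {H : Type*} [RCLike 𝕜] [NormedAddCommGroup H] [InnerProductSpace 𝕜 H]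

def IsFinslerMetric (ρ : H → H → ℝ) : Prop :=
  ∀ g : H, g ≠ 0 → ∀ h : H, ∀ r : 𝕜, ρ g (r • h) = ‖r‖ * ρ g h

def IsCongruenceInvariant (ρ : H → H → ℝ) : Prop :=
  ∀ c : 𝕜, c ≠ 0 → ∀ T : H →ₗᵢ[𝕜] H, ∀ g : H, g ≠ 0 → ∀ h : H, ρ (c • T g) (c • T h) = ρ g h

variable {𝕜} {ρ : H → H → ℝ}

namespace IsFinslerMetric

variable (hρ : IsFinslerMetric 𝕜 ρ)
include hρ

theorem apply_zero {g : H} (hg : g ≠ 0) : ρ g 0 = 0 := by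
  simpa using hρ g hg 0 0

theorem apply_eq_of_norm_inner_eq (hinv : IsCongruenceInvariant 𝕜 ρ) {g h g' h' : H}
    (hg : ‖g‖ = 1) (hh : ‖h‖ = 1) (hg' : ‖g'‖ = 1) (hh' : ‖h'‖ = 1)
    (hgh : ‖⟪g, h⟫_𝕜‖ = ‖⟪g', h'⟫_𝕜‖) : ρ g h = ρ g' h' := by
  have hg0 : g ≠ 0 := by rintro rfl; simp at hg
  obtain ⟨u, hu, hugh⟩ := exists_norm_eq_one_mul_eq hgh
  obtain ⟨T, hTg, hTh⟩ := exists_linearIsometry_apply_eq_pair (y := u • h) (y' := h') hg hg'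
    (by rw [norm_smul, hu, one_mul, hh, hh']) (by rw [inner_smul_right, hugh])
  calc ρ g h = ρ g (u • h) := by rw [hρ g hg0, hu, one_mul]
    _ = ρ g' h' := by simpa [hTg, hTh] using (hinv 1 one_ne_zero T g hg0 (u • h)).symm

theorem apply_eq_norm_div_mul_apply_normalize (hinv : IsCongruenceInvariant 𝕜 ρ) {g h : H}
    (hg : g ≠ 0) (hh : h ≠ 0) :
    ρ g h = ‖h‖ / ‖g‖ * ρ ((‖g‖ : 𝕜)⁻¹ • g) ((‖h‖ : 𝕜)⁻¹ • h) := by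
  have hc : (‖g‖ : 𝕜)⁻¹ ≠ 0 := by simpa using hg
  have hscale : (‖g‖ : 𝕜)⁻¹ • h = ((‖h‖ / ‖g‖ : ℝ) : 𝕜) • (‖h‖ : 𝕜)⁻¹ • h := by
    rw [smul_smul]
    congr 1
    push_cast
    field_simp [norm_ne_zero_iff.2 hh]
  rw [← hinv _ hc LinearIsometry.id g hg h, LinearIsometry.id_apply, LinearIsometry.id_apply,
    hscale, hρ _ (smul_ne_zero hc hg), RCLike.norm_ofReal, abs_of_nonneg (by positivity)]

theorem exists_eq_norm_div_mul_acuteAngle (hinv : IsCongruenceInvariant 𝕜 ρ) :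
    ∃ ϑ : ℝ → ℝ, ∀ g h : H, g ≠ 0 → h ≠ 0 → ρ g h = ‖h‖ / ‖g‖ * ϑ (acuteAngle 𝕜 g h) := by
  let IsUnitPairAt (θ : ℝ) (p : H × H) : Prop :=
    ‖p.1‖ = 1 ∧ ‖p.2‖ = 1 ∧ acuteAngle 𝕜 p.1 p.2 = θ
  -- `ϑ θ` is `ρ` at some unit pair at angle `θ`, if there is one.
  refine ⟨fun θ => ρ (Classical.epsilon (IsUnitPairAt θ)).1 (Classical.epsilon (IsUnitPairAt θ)).2,
    fun g h hg hh => ?_⟩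
  have hunit : ∀ x : H, x ≠ 0 → ‖(‖x‖ : 𝕜)⁻¹ • x‖ = 1 := fun x hx => by
    simp [norm_smul, norm_ne_zero_iff.2 hx]
  have hangle : acuteAngle 𝕜 ((‖g‖ : 𝕜)⁻¹ • g) ((‖h‖ : 𝕜)⁻¹ • h) = acuteAngle 𝕜 g h :=
    acuteAngle_smul_smul (by simpa using hg) (by simpa using hh) g h
  set p := Classical.epsilon (IsUnitPairAt (acuteAngle 𝕜 g h))
  obtain ⟨hp₁, hp₂, hpθ⟩ : IsUnitPairAt (acuteAngle 𝕜 g h) p :=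
    Classical.epsilon_spec ⟨(_, _), hunit g hg, hunit h hh, hangle⟩
  have hinner : ‖⟪(‖g‖ : 𝕜)⁻¹ • g, (‖h‖ : 𝕜)⁻¹ • h⟫_𝕜‖ = ‖⟪p.1, p.2⟫_𝕜‖ := by
    rw [← cos_acuteAngle_of_norm_eq_one (hunit g hg) (hunit h hh),
      ← cos_acuteAngle_of_norm_eq_one hp₁ hp₂, hangle, hpθ]
  rw [hρ.apply_eq_norm_div_mul_apply_normalize hinv hg hh,
    hρ.apply_eq_of_norm_inner_eq hinv (hunit g hg) (hunit h hh) hp₁ hp₂ hinner]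

theorem isCongruenceInvariant_of_eq_norm_div_mul_acuteAngle {ϑ : ℝ → ℝ}
    (hϑ : ∀ g h : H, g ≠ 0 → h ≠ 0 → ρ g h = ‖h‖ / ‖g‖ * ϑ (acuteAngle 𝕜 g h)) :
    IsCongruenceInvariant 𝕜 ρ := by
  intro c hc T g hg h
  have hTg : c • T g ≠ 0 := smul_ne_zero hc ((map_ne_zero_iff T T.injective).2 hg)
  rcases eq_or_ne h 0 with rfl | hh
  · rw [map_zero, smul_zero, hρ.apply_zero hTg, hρ.apply_zero hg]
  · rw [hϑ _ _ hTg (smul_ne_zero hc ((map_ne_zero_iff T T.injective).2 hh)), hϑ g h hg hh,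
      acuteAngle_smul_smul hc hc, T.acuteAngle_map, norm_smul, norm_smul, T.norm_map,
      T.norm_map, mul_div_mul_left _ _ (norm_ne_zero_iff.2 hc)]

end IsFinslerMetric

end Finsler

/-- a Finsler metric `ρ` on `H \ {0}` is invariant with respect to every
congruence (nonzero scalar multiple of an isometry) iff there is `ϑ : [0,π/2] → ℝ`
such that `ρ_g(h) = (‖h‖/‖g‖) ϑ(∠(g,h))` for all nonzero `g, h`. -/
theorem stmt8 {𝕜 H : Type*} [RCLike 𝕜] [NormedAddCommGroup H] [InnerProductSpace 𝕜 H]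
    (ρ : H → H → ℝ)
    (hFinsler : ∀ g : H, g ≠ 0 → ∀ h : H, ∀ r : 𝕜, ρ g (r • h) = ‖r‖ * ρ g h) :
    (∀ c : 𝕜, c ≠ 0 → ∀ T : H →ₗᵢ[𝕜] H, ∀ g : H, g ≠ 0 → ∀ h : H,
        ρ (c • T g) (c • T h) = ρ g h) ↔
      ∃ ϑ : ℝ → ℝ, ∀ g h : H, g ≠ 0 → h ≠ 0 →
        ρ g h = ‖h‖ / ‖g‖ * ϑ (acuteAngle 𝕜 g h) := by
  have hρ : IsFinslerMetric 𝕜 ρ := hFinsler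
  exact ⟨hρ.exists_eq_norm_div_mul_acuteAngle,
    fun ⟨_, hϑ⟩ => hρ.isCongruenceInvariant_of_eq_norm_div_mul_acuteAngle hϑ⟩
end

section
/- Let G ⊆ H be an isometry-invariant open set and let ρ be an isometry-invariant Finsler metric on G which is not identically zero. Then every symmetry of ρ is injective: if T : H → H is a linear map with T(G) ⊆ G and ρ_{Tg}(Th) = ρ_g(h) for all g ∈ G and h ∈ H, then T is injective. -/
/-! Linear isometries act transitively on each sphere of `H` and preserve `G`, so by homogeneity
an isometry-invariant Finsler metric that is nonzero somewhere is nonzero, at some base point, in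
every nonzero direction `x`. A symmetry `T` with `T x = 0` would then give
`ρ_g(x) = ρ_{Tg}(0) = 0`. -/

/-- `G` is an isometry-invariant open set in `H`: `G = {x : ‖x‖ ∈ R}` for some open
subset `R` of `[0,∞)`. -/
def IsInvariantOpen {H : Type*} [NormedAddCommGroup H] (G : Set H) : Prop :=
  ∃ R : Set ℝ, IsOpen {r : Set.Ici (0 : ℝ) | (r : ℝ) ∈ R} ∧ G = {x : H | ‖x‖ ∈ R}

open scoped InnerProductSpace ComplexConjugate

section LinearIsometry

variable {𝕜 H : Type*} [RCLike 𝕜] [NormedAddCommGroup H] [InnerProductSpace 𝕜 H]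

theorem Submodule.reflection_sub_of_inner_comm {v w : H} (h : ‖v‖ = ‖w‖) (hvw : ⟪v, w⟫_𝕜 = ⟪w, v⟫_𝕜) :
    Submodule.reflection (𝕜 ∙ (v - w))ᗮ v = w := by
  set R := Submodule.reflection (𝕜 ∙ (v - w))ᗮ
  have h_sub : R (v - w) = -(v - w) :=
    Submodule.reflection_orthogonalComplement_singleton_eq_neg (v - w)
  have h_add : R (v + w) = v + w := by
    apply Submodule.reflection_mem_subspace_eq_self
    rw [Submodule.mem_orthogonal_singleton_iff_inner_left, inner_sub_right, inner_add_left,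
      inner_add_left, inner_self_eq_norm_sq_to_K, inner_self_eq_norm_sq_to_K, h, hvw]
    ring
  have h_two : (2 : 𝕜) • R v = (2 : 𝕜) • w := calc
    (2 : 𝕜) • R v = R (v + w) + R (v - w) := by rw [map_add, map_sub, two_smul]; abel
    _ = (2 : 𝕜) • w := by rw [h_add, h_sub, two_smul]; abel
  exact smul_right_injective H two_ne_zero h_two

theorem exists_linearIsometry_apply_eq {v w : H} (h : ‖v‖ = ‖w‖) :
    ∃ S : H →ₗᵢ[𝕜] H, S v = w := by
  obtain ⟨c, hc, hca⟩ := RCLike.exists_norm_eq_mul_self ⟪v, w⟫_𝕜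
  -- rotating `v` by the phase `conj c` makes its inner product with `w` real
  let rotate : H →ₗᵢ[𝕜] H := ⟨conj c • LinearMap.id, fun x => by simp [norm_smul, hc]⟩
  have h_real : ⟪rotate v, w⟫_𝕜 = ‖⟪v, w⟫_𝕜‖ := by
    simp [rotate, inner_smul_left, hca]
  refine ⟨(Submodule.reflection (𝕜 ∙ (rotate v - w))ᗮ).toLinearIsometry.comp rotate,
    Submodule.reflection_sub_of_inner_comm (by rw [rotate.norm_map, h]) ?_⟩
  rw [← inner_conj_symm w (rotate v), h_real, RCLike.conj_ofReal]

end LinearIsometry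

theorem IsInvariantOpen.map_mem {H : Type*} [NormedAddCommGroup H] {G : Set H}
    (hG : IsInvariantOpen G) {f : H → H} (hf : ∀ x, ‖f x‖ = ‖x‖) {g : H} (hg : g ∈ G) :
    f g ∈ G := by
  obtain ⟨R, -, rfl⟩ := hG
  simpa [hf] using hg

section Finsler

variable {𝕜 H : Type*} [RCLike 𝕜] [NormedAddCommGroup H] [InnerProductSpace 𝕜 H]
  {G : Set H} {ρ : H → H → ℝ}

theorem finsler_apply_zero (hFinsler : ∀ g ∈ G, ∀ h : H, ∀ r : 𝕜, ρ g (r • h) = ‖r‖ * ρ g h)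
    {g : H} (hg : g ∈ G) : ρ g 0 = 0 := by
  simpa using hFinsler g hg 0 0

theorem exists_apply_ne_zero_of_isometry_invariant (hG : IsInvariantOpen G)
    (hFinsler : ∀ g ∈ G, ∀ h : H, ∀ r : 𝕜, ρ g (r • h) = ‖r‖ * ρ g h)
    (hinv : ∀ S : H →ₗᵢ[𝕜] H, ∀ g ∈ G, ∀ h : H, ρ (S g) (S h) = ρ g h)
    (hne : ∃ g ∈ G, ∃ h : H, ρ g h ≠ 0) {x : H} (hx : x ≠ 0) :
    ∃ g ∈ G, ρ g x ≠ 0 := by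
  obtain ⟨g, hg, h, hgh⟩ := hne
  set c : 𝕜 := ((‖h‖ / ‖x‖ : ℝ) : 𝕜)
  have hcx : ‖h‖ = ‖c • x‖ := by
    rw [norm_smul, RCLike.norm_ofReal, abs_of_nonneg (by positivity),
      div_mul_cancel₀ _ (norm_ne_zero_iff.2 hx)]
  obtain ⟨S, hS⟩ := exists_linearIsometry_apply_eq (𝕜 := 𝕜) hcx
  have hSg : S g ∈ G := hG.map_mem S.norm_map hg
  refine ⟨S g, hSg, right_ne_zero_of_mul (a := ‖c‖) ?_⟩
  rwa [← hFinsler _ hSg, ← hS, hinv S g hg]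

end Finsler

/-- if `ρ` is a non-zero isometry-invariant Finsler metric on an
isometry-invariant open set `G`, then every symmetry of `ρ` is injective. -/
theorem stmt12 {𝕜 H : Type*} [RCLike 𝕜] [NormedAddCommGroup H] [InnerProductSpace 𝕜 H]
    (G : Set H) (hG : IsInvariantOpen G)
    (ρ : H → H → ℝ)
    (hFinsler : ∀ g ∈ G, ∀ h : H, ∀ r : 𝕜, ρ g (r • h) = ‖r‖ * ρ g h)
    (hinv : ∀ S : H →ₗᵢ[𝕜] H, ∀ g ∈ G, ∀ h : H, ρ (S g) (S h) = ρ g h)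
    (hne : ∃ g ∈ G, ∃ h : H, ρ g h ≠ 0)
    (T : H →ₗ[𝕜] H) (hTG : T '' G ⊆ G)
    (hT : ∀ g ∈ G, ∀ h : H, ρ (T g) (T h) = ρ g h) :
    Function.Injective T := by
  refine (injective_iff_map_eq_zero T).2 fun x hx => ?_
  by_contra hx0
  obtain ⟨g, hg, hgx⟩ := exists_apply_ne_zero_of_isometry_invariant hG hFinsler hinv hne hx0
  apply hgx
  rw [← hT g hg x, hx, finsler_apply_zero hFinsler (hTG ⟨g, hg, rfl⟩)]
end
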